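/- Let (X, f_{1,∞}) be a nonautonomous discrete dynamical system such that the sequence (f_n)_{n∈ℕ} converges uniformly to a function φ : X → X. If p is a free idempotent ultrafilter on ℕ (i.e. p + p = p), then φ^p ∘ f_1^{q+p} = f_1^{q+p} for every free ultrafilter q on ℕ; that is, f_1^{q+p}(x) is a fixed point of φ^p for every free ultrafilter q and every x ∈ X. -/

import Mathlib

open Filter Topology

/-- The `n`-th iterate `f_1^n = f_n ∘ ⋯ ∘ f_1` (maps indexed from `1`; `f 0` unused). -/
def iterSeq {X : Type*} (f : ℕ → X → X) : ℕ → X → X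
  | 0 => id
  | n + 1 => f (n + 1) ∘ iterSeq f n

/-- The `p`-limit of a sequence `u` with respect to an ultrafilter `p` on `ℕ`. -/
noncomputable def pLim {X : Type*} [TopologicalSpace X] (p : Ultrafilter ℕ) (u : ℕ → X) : X :=
  letI : Nonempty X := ⟨u 0⟩
  limUnder (p : Filter ℕ) u

/-- `f_1^p(x) = p-lim_n f_1^n(x)`. -/
noncomputable def pIter {X : Type*} [TopologicalSpace X] (f : ℕ → X → X)
    (p : Ultrafilter ℕ) : X → X :=
  fun x => pLim p fun n => iterSeq f n x

/-- `φ^q(x) = q-lim_n φ^n(x)` for a single map `φ : X → X`. -/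
noncomputable def pIterMap {X : Type*} [TopologicalSpace X] (φ : X → X)
    (q : Ultrafilter ℕ) : X → X :=
  fun x => pLim q fun n => φ^[n] x

/-- The sum of two ultrafilters on `ℕ`: `A ∈ p + q` iff `{n : {m : m + n ∈ A} ∈ p} ∈ q`. -/
def uAdd (p q : Ultrafilter ℕ) : Ultrafilter ℕ :=
  q.bind fun n => p.map fun m => m + n

/-!
Splitting `f_1^{m+n} = f_{m+n} ∘ ⋯ ∘ f_{m+1} ∘ f_1^m` and letting `m → ∞` along a free `q`,
uniform convergence turns the outer block into `φ^n`, so `q-lim_m f_1^{m+n}(x) = φ^n(f_1^q x)`.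
Taking the `p`-limit over `n` gives `f_1^{q+p} = φ^p ∘ f_1^q`, and likewise
`φ^{p+p} = φ^p ∘ φ^p`; idempotence `p + p = p` then makes `φ^p` fix every `f_1^{q+p}(x)`.
-/

section PLim

variable {X : Type*} [TopologicalSpace X]

lemma tendsto_pLim [CompactSpace X] (p : Ultrafilter ℕ) (u : ℕ → X) :
    Tendsto u p (𝓝 (pLim p u)) :=
  letI : Nonempty X := ⟨u 0⟩
  tendsto_nhds_limUnder ⟨_, (p.map u).le_nhds_lim⟩

lemma pLim_eq_of_tendsto [T2Space X] {p : Ultrafilter ℕ} {u : ℕ → X} {a : X}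
    (h : Tendsto u p (𝓝 a)) : pLim p u = a :=
  letI : Nonempty X := ⟨a⟩
  h.limUnder_eq

variable [CompactSpace X] [T2Space X]

lemma Continuous.pLim_comp {g : X → X} (hg : Continuous g) (p : Ultrafilter ℕ) (u : ℕ → X) :
    pLim p (fun n => g (u n)) = g (pLim p u) :=
  pLim_eq_of_tendsto ((hg.tendsto _).comp (tendsto_pLim p u))

lemma pLim_uAdd (p q : Ultrafilter ℕ) (u : ℕ → X) :
    pLim (uAdd q p) u = pLim p (fun n => pLim q (fun m => u (m + n))) := by
  refine pLim_eq_of_tendsto fun V hV => ?_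
  have hV' := (tendsto_pLim p _).eventually (eventually_eventually_nhds.mpr hV)
  exact hV'.mono fun n hn => (tendsto_pLim q fun m => u (m + n)).eventually hn

end PLim

lemma TendstoUniformly.comp_tendsto {α β ι ι' : Type*} [UniformSpace β] {F : ι → α → β}
    {φ : α → β} {l : Filter ι} (h : TendstoUniformly F φ l) {l' : Filter ι'} {k : ι' → ι}
    (hk : Tendsto k l' l) : TendstoUniformly (fun i => F (k i)) φ l' :=
  fun U hU => hk.eventually (h U hU)

section Iterates

variable {X : Type*} [UniformSpace X] [CompactSpace X]

lemma tendsto_iterSeq_add {f : ℕ → X → X} {φ : X → X} (hφ : Continuous φ)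
    (hconv : TendstoUniformly (fun n x => f n x) φ atTop)
    {q : Ultrafilter ℕ} (hq : (q : Filter ℕ) ≤ cofinite) (x : X) (n : ℕ) :
    Tendsto (fun m => iterSeq f (m + n) x) q (𝓝 (φ^[n] (pIter f q x))) := by
  induction n with
  | zero => exact tendsto_pLim q _
  | succ n ih =>
    have hshift : Tendsto (fun m => m + (n + 1)) q atTop :=
      (tendsto_add_atTop_nat (n + 1)).mono_left (Nat.cofinite_eq_atTop ▸ hq)
    rw [Function.iterate_succ_apply']
    exact (hconv.comp_tendsto hshift).tendsto_comp hφ.continuousAt ih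

variable [T2Space X]

lemma pIter_uAdd {f : ℕ → X → X} {φ : X → X} (hφ : Continuous φ)
    (hconv : TendstoUniformly (fun n x => f n x) φ atTop)
    (p : Ultrafilter ℕ) {q : Ultrafilter ℕ} (hq : (q : Filter ℕ) ≤ cofinite) (x : X) :
    pIter f (uAdd q p) x = pIterMap φ p (pIter f q x) := by
  unfold pIter
  rw [pLim_uAdd]
  simp only [pLim_eq_of_tendsto (tendsto_iterSeq_add hφ hconv hq x _)]
  rfl

lemma pIterMap_uAdd {φ : X → X} (hφ : Continuous φ) (p q : Ultrafilter ℕ) (y : X) :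
    pIterMap φ (uAdd q p) y = pIterMap φ p (pIterMap φ q y) := by
  unfold pIterMap
  rw [pLim_uAdd]
  congr 1
  funext n
  simp only [add_comm _ n, Function.iterate_add_apply]
  exact (hφ.iterate n).pLim_comp q _

end Iterates

theorem stmt18_general {X : Type*} [MetricSpace X] [CompactSpace X]
    (f : ℕ → X → X) (hf : ∀ n, 1 ≤ n → Continuous (f n))
    (φ : X → X) (hconv : TendstoUniformly (fun n x => f n x) φ Filter.atTop)
    (p : Ultrafilter ℕ)
    (hidem : uAdd p p = p) :
    ∀ q : Ultrafilter ℕ, (q : Filter ℕ) ≤ Filter.cofinite →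
      ∀ x : X, pIterMap φ p (pIter f (uAdd q p) x) = pIter f (uAdd q p) x := by
  have hφ : Continuous φ :=
    hconv.continuous ((eventually_ge_atTop 1).mono hf).frequently
  intro q hq x
  rw [pIter_uAdd hφ hconv p hq, ← pIterMap_uAdd hφ, hidem]

/-- If `(f_n)` converges uniformly to `φ : X → X` and `p` is a free idempotent ultrafilter
on `ℕ` (`p + p = p`), then `φ^p ∘ f_1^{q+p} = f_1^{q+p}` for every free ultrafilter `q`;
that is, `f_1^{q+p}(x)` is a fixed point of `φ^p` for every free `q` and every `x ∈ X`. -/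
theorem stmt18 {X : Type*} [MetricSpace X] [CompactSpace X]
    (f : ℕ → X → X) (hf : ∀ n, 1 ≤ n → Continuous (f n))
    (φ : X → X) (hconv : TendstoUniformly (fun n x => f n x) φ Filter.atTop)
    (p : Ultrafilter ℕ) (hp : (p : Filter ℕ) ≤ Filter.cofinite)
    (hidem : uAdd p p = p) :
    ∀ q : Ultrafilter ℕ, (q : Filter ℕ) ≤ Filter.cofinite →
      ∀ x : X, pIterMap φ p (pIter f (uAdd q p) x) = pIter f (uAdd q p) x :=
  stmt18_general f hf φ hconv p hidem
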